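/- arXiv:math/0611673 — 5 statements merged into one kernel-verified Lean document; each statement's English description precedes it below -/
import Mathlib

section
/- Let K ⊆ L be fields and let L₀, E₀, E be intermediate fields with K ⊆ E₀ ⊆ E ⊆ L and E₀ ⊆ L₀ ⊆ L. Suppose that L is a finite separable extension of L₀, that the degree [E : E₀] equals [L : L₀], and that L is the compositum of E and L₀ inside L. Then E is a separable extension of E₀. -/
open Module IntermediateField Polynomial

set_option maxHeartbeats 1000000
set_option synthInstance.maxHeartbeats 400000

/-- Let `K ⊆ L` be fields and `E₀ ⊆ E`, `E₀ ⊆ L₀` intermediate fields of `L/K`.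
If `L/L₀` is finite and separable, `[E : E₀] = [L : L₀]` and `L = E·L₀`, then `E/E₀` is
separable. -/
theorem isSeparable_of_isDefinedOver (K L : Type*) [Field K] [Field L] [Algebra K L]
    (E₀ E L₀ : IntermediateField K L) (hE : E₀ ≤ E) (hL₀ : E₀ ≤ L₀)
    [FiniteDimensional ↥L₀ L] [Algebra.IsSeparable ↥L₀ L]
    (hdeg : Module.finrank ↥E₀ ↥(IntermediateField.extendScalars hE) = Module.finrank ↥L₀ L)
    (hcomp : E ⊔ L₀ = ⊤) :
    Algebra.IsSeparable ↥E₀ ↥(IntermediateField.extendScalars hE) := by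
  set E' := extendScalars hE with hE'def
  set L₀' := extendScalars hL₀ with hL₀'def
  haveI hLfin : FiniteDimensional ↥L₀' L := ‹FiniteDimensional ↥L₀ L›
  haveI hLsep : Algebra.IsSeparable ↥L₀' L := ‹Algebra.IsSeparable ↥L₀ L›
  haveI hfin : FiniteDimensional ↥E₀ ↥E' :=
    FiniteDimensional.of_finrank_pos (hdeg ▸ finrank_pos (R := ↥L₀) (M := L))
  -- the sup over E₀
  have hsup : E' ⊔ L₀' = ⊤ := by
    apply restrictScalars_injective K
    rw [← restrictScalars_sup]
    simpa [hE'def, hL₀'def] using hcomp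
  -- adjoin E₀ E = E'
  have hadj : adjoin ↥E₀ (E : Set L) = E' := by
    apply restrictScalars_injective K
    rw [restrictScalars_adjoin, Set.union_eq_self_of_subset_left hE,
      extendScalars_restrictScalars, adjoin_self]
  -- adjoin L₀' E = ⊤
  have hadjTop : adjoin ↥L₀' (E : Set L) = ⊤ := by
    apply restrictScalars_injective ↥E₀
    rw [restrictScalars_adjoin_eq_sup, hadj, sup_comm, hsup]
    rfl
  -- linear independence of a basis of E'/E₀ over L₀'
  have hbli : ∀ {ι : Type} [Fintype ι] (b : Basis ι ↥E₀ ↥E'),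
      LinearIndependent ↥L₀' (E'.val ∘ b) := by
    intro ι _ b
    apply linearIndependent_of_top_le_span_of_card_eq_finrank
    · -- span
      have h1 : (Submonoid.closure (E : Set L) : Set L) ⊆ (E : Set L) := by
        intro y hy
        exact Submonoid.closure_le (S := E.toSubalgebra.toSubmonoid).2 (fun z hz => hz) hy
      have h2 : (E : Set L) ⊆ (Submodule.span ↥L₀' (Set.range (E'.val ∘ b)) : Set L) := by
        intro y hy
        have hmem : (⟨y, hy⟩ : ↥E') ∈ Submodule.span ↥E₀ (Set.range b) := by
          rw [b.span_eq]; trivial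
        have := Submodule.mem_map_of_mem (f := E'.val.toLinearMap) hmem
        rw [Submodule.map_span, ← Set.range_comp] at this
        have hle : Submodule.span ↥E₀ (Set.range (E'.val ∘ b)) ≤
            (Submodule.span ↥L₀' (Set.range (E'.val ∘ b))).restrictScalars ↥E₀ :=
          Submodule.span_le_restrictScalars _ _ _
        exact hle this
      have h3 : Algebra.adjoin ↥L₀' (E : Set L) = ⊤ := by
        have := congrArg IntermediateField.toSubalgebra hadjTop
        rwa [adjoin_toSubalgebra_of_isAlgebraic
          (fun x _ => (Algebra.IsAlgebraic.of_finite ↥L₀' L).isAlgebraic x),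
          top_toSubalgebra] at this
      have h4 : Subalgebra.toSubmodule (Algebra.adjoin ↥L₀' (E : Set L)) ≤
          Submodule.span ↥L₀' (Set.range (E'.val ∘ b)) := by
        rw [Algebra.adjoin_eq_span]
        exact Submodule.span_le.2 (h1.trans h2)
      rw [h3] at h4
      exact fun x _ => h4 trivial
    · exact (Module.finrank_eq_card_basis b).symm.trans hdeg
  -- linear disjointness
  have hdisj : E'.LinearDisjoint ↥L₀' :=
    LinearDisjoint.of_basis_left (finBasis ↥E₀ ↥E') (hbli _)
  constructor
  intro x
  have hxint : IsIntegral ↥E₀ x := IsIntegral.of_finite _ _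
  have hyint : IsIntegral ↥E₀ (E'.val x) := hxint.map E'.val
  show (minpoly ↥E₀ x).Separable
  rw [← minpoly.algHom_eq E'.val Subtype.val_injective x]
  set y : L := E'.val x with hydef
  set d := (minpoly ↥E₀ y).natDegree with hddef
  -- E₀⟮y⟯ ≤ E'
  have hsub : adjoin ↥E₀ {y} ≤ E' :=
    adjoin_le_iff.2 (Set.singleton_subset_iff.2 x.2)
  have hd2 : (adjoin ↥E₀ {y}).LinearDisjoint ↥L₀' := hdisj.of_le_left hsub
  let pb := IntermediateField.adjoin.powerBasis hyint
  have hli : LinearIndependent ↥L₀' ((adjoin ↥E₀ {y}).val ∘ pb.basis) :=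
    hd2.linearIndependent_left pb.basis.linearIndependent
  have hli' : LinearIndependent ↥L₀' (fun i : Fin d => y ^ (i : ℕ)) := by
    have hdim : pb.dim = d := rfl
    rw [← hdim]
    convert hli with i
    simp only [Function.comp_apply, pb.basis_eq_pow]
    simp [pb]
  -- degree bound
  have hyintL : IsIntegral ↥L₀' y := IsIntegral.of_finite _ _
  have hdle : d ≤ (minpoly ↥L₀' y).natDegree := by
    by_contra hlt
    push_neg at hlt
    set q := minpoly ↥L₀' y with hqdef
    have hsum : ∑ i : Fin d, q.coeff (i : ℕ) • y ^ (i : ℕ) = 0 := by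
      have := aeval_eq_sum_range' hlt y
      rw [minpoly.aeval] at this
      rw [Fin.sum_univ_eq_sum_range (fun i => q.coeff i • y ^ i) d]
      exact this.symm
    have := Fintype.linearIndependent_iff.1 hli' (fun i => q.coeff (i : ℕ)) hsum
      ⟨q.natDegree, hlt⟩
    exact one_ne_zero (((minpoly.monic hyintL).coeff_natDegree).symm.trans this)
  have hdvd : minpoly ↥L₀' y ∣ (minpoly ↥E₀ y).map (algebraMap ↥E₀ ↥L₀') :=
    minpoly.dvd_map_of_isScalarTower ↥E₀ ↥L₀' y
  have heq : (minpoly ↥E₀ y).map (algebraMap ↥E₀ ↥L₀') = minpoly ↥L₀' y := by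
    apply eq_of_monic_of_dvd_of_natDegree_le (minpoly.monic hyintL)
      ((minpoly.monic hyint).map _) hdvd
    rw [natDegree_map]
    exact hdle
  have hsep : (minpoly ↥L₀' y).Separable := Algebra.IsSeparable.isSeparable ↥L₀' y
  rw [← heq] at hsep
  exact (separable_map _).1 hsep
end

section
/- Let K be a field, L a field extension of K, and G a finite group acting faithfully on L by K-algebra automorphisms. Let E be an intermediate field K ⊆ E ⊆ L that is stable under the action of G (σ(E) ⊆ E for all σ ∈ G), and let L^G and E^G denote the fixed fields of G in L and in E respectively. Then the following are equivalent: (a) G acts faithfully on E, i.e., no non-identity element of G restricts to the identity map on E; (b) [E : E^G] = [L : L^G] and L is the compositum of E and L^G. -/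
universe v

private theorem finrank_congr_aux {R R' : Type*} {S S' : Type v}
    [CommRing R] [CommRing R'] [Ring S] [Ring S'] [Algebra R S] [Algebra R' S']
    (i : R ≃+* R') (j : S ≃+* S')
    (hc : (algebraMap R' S').comp i.toRingHom = j.toRingHom.comp (algebraMap R S)) :
    Module.finrank R S = Module.finrank R' S' := by
  have := Algebra.rank_eq_of_equiv_equiv i j hc
  unfold Module.finrank
  rw [this]

/-- Let a finite group `G` act faithfully on a field extension `L/K` by `K`-algebra
automorphisms (via an injective homomorphism `φ : G →* (L ≃ₐ[K] L)`), and let `E` be a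
`G`-stable intermediate field of `L/K`.  Writing `L^G` for the fixed field of `G` in `L`
and `E^G = E ⊓ L^G` for the fixed field of `G` in `E`, the following are equivalent:
(a) `G` acts faithfully on `E`;
(b) `[E : E^G] = [L : L^G]` and `L = E · L^G`. -/
theorem faithful_subfield_iff_defines (K L : Type*) [Field K] [Field L] [Algebra K L]
    (G : Type*) [Group G] [Finite G] (φ : G →* (L ≃ₐ[K] L)) (hφ : Function.Injective φ)
    (E : IntermediateField K L) (hstab : ∀ g : G, ∀ x ∈ E, φ g x ∈ E) :
    (∀ g : G, g ≠ 1 → ∃ x ∈ E, φ g x ≠ x) ↔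
      (Module.finrank ↥(E ⊓ IntermediateField.fixedField φ.range)
          ↥(IntermediateField.extendScalars
            (inf_le_left : E ⊓ IntermediateField.fixedField φ.range ≤ E)) =
        Module.finrank ↥(IntermediateField.fixedField φ.range) L ∧
      E ⊔ IntermediateField.fixedField φ.range = ⊤) := by
  classical
  cases nonempty_fintype G
  letI : MulSemiringAction G L := MulSemiringAction.compHom L φ
  haveI : FaithfulSMul G L := ⟨fun {g₁ g₂} h => hφ (AlgEquiv.ext h)⟩
  set F := IntermediateField.fixedField φ.range with hF
  have hmemF : ∀ x : L, x ∈ F ↔ ∀ g : G, φ g x = x := by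
    intro x
    rw [hF]
    change x ∈ MulAction.fixedPoints φ.range L ↔ _
    rw [MulAction.mem_fixedPoints]
    constructor
    · intro h g; exact h ⟨φ g, g, rfl⟩
    · rintro h ⟨σ, g, rfl⟩; exact h g
  have hmemFs : ∀ x : L, x ∈ FixedPoints.subfield G L ↔ ∀ g : G, φ g x = x := by
    intro x
    change x ∈ MulAction.fixedPoints G L ↔ _
    rw [MulAction.mem_fixedPoints]
    exact Iff.rfl
  -- the restricted action on E
  set S := E.toSubfield with hS
  haveI : IsInvariantSubfield G S := ⟨fun m {x} hx => hstab m x hx⟩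
  set ψ := MulSemiringAction.toRingAut G ↥S with hψ
  set H := ψ.ker with hH
  have hmemH : ∀ g : G, g ∈ H ↔ ∀ x ∈ E, φ g x = x := by
    intro g
    rw [hH, MonoidHom.mem_ker, RingEquiv.ext_iff]
    constructor
    · intro h x hx; exact congrArg Subtype.val (h ⟨x, hx⟩)
    · intro h x; exact Subtype.ext (h x.1 x.2)
  set Q := G ⧸ H with hQ
  letI : MulSemiringAction Q ↥S := MulSemiringAction.compHom _ (QuotientGroup.kerLift ψ)
  haveI : FaithfulSMul Q ↥S := ⟨by
    intro q₁ q₂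
    refine Quotient.inductionOn₂' q₁ q₂ (fun g₁ g₂ h => QuotientGroup.eq.mpr ?_)
    rw [hH, MonoidHom.mem_ker, map_mul, map_inv, inv_mul_eq_one, RingEquiv.ext_iff]
    exact fun x => h x⟩
  letI : Fintype Q := Fintype.ofFinite Q
  have hFixQ : ∀ y : ↥S, (y ∈ FixedPoints.subfield Q ↥S ↔ ∀ g : G, φ g y.1 = y.1) := by
    intro y
    change y ∈ MulAction.fixedPoints Q ↥S ↔ _
    rw [MulAction.mem_fixedPoints]
    constructor
    · intro h g
      exact congrArg Subtype.val (h (QuotientGroup.mk g))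
    · intro h q
      induction q using QuotientGroup.induction_on with
      | H g => exact Subtype.ext (h g)
  -- Artin
  have artinL : Module.finrank ↥(FixedPoints.subfield G L) L = Fintype.card G :=
    FixedPoints.finrank_eq_card G L
  have artinE : Module.finrank ↥(FixedPoints.subfield Q ↥S) ↥S = Fintype.card Q :=
    FixedPoints.finrank_eq_card Q ↥S
  -- bridge 1
  have b1 : Module.finrank ↥F L = Fintype.card G := by
    rw [← artinL]
    refine finrank_congr_aux
      { toFun := fun x => ⟨x.1, (hmemFs x.1).2 ((hmemF x.1).1 x.2)⟩
        invFun := fun x => ⟨x.1, (hmemF x.1).2 ((hmemFs x.1).1 x.2)⟩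
        left_inv := fun x => rfl
        right_inv := fun x => rfl
        map_mul' := fun _ _ => rfl
        map_add' := fun _ _ => rfl } (RingEquiv.refl L) (RingHom.ext fun x => rfl)
  -- bridge 2
  have b2 : Module.finrank ↥(E ⊓ F)
      ↥(IntermediateField.extendScalars (inf_le_left : E ⊓ F ≤ E)) = Fintype.card Q := by
    rw [← artinE]
    refine finrank_congr_aux
      { toFun := fun x => ⟨⟨x.1, x.2.1⟩, (hFixQ ⟨x.1, x.2.1⟩).2
          (fun g => (hmemF x.1).1 x.2.2 g)⟩
        invFun := fun y => ⟨y.1.1, ⟨y.1.2, (hmemF y.1.1).2 ((hFixQ y.1).1 y.2)⟩⟩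
        left_inv := fun x => rfl
        right_inv := fun y => rfl
        map_mul' := fun _ _ => rfl
        map_add' := fun _ _ => rfl }
      { toFun := fun x => ⟨x.1, x.2⟩
        invFun := fun x => ⟨x.1, x.2⟩
        left_inv := fun x => rfl
        right_inv := fun x => rfl
        map_mul' := fun _ _ => rfl
        map_add' := fun _ _ => rfl } (RingHom.ext fun x => rfl)
  -- kernel characterizations
  have hbot_iff : H = ⊥ ↔ (∀ g : G, g ≠ 1 → ∃ x ∈ E, φ g x ≠ x) := by
    rw [eq_bot_iff]
    constructor
    · intro h g hg
      by_contra hc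
      push_neg at hc
      exact hg (Subgroup.mem_bot.mp (h ((hmemH g).2 hc)))
    · intro h g hg
      rw [Subgroup.mem_bot]
      by_contra hne
      obtain ⟨x, hxE, hx⟩ := h g hne
      exact hx ((hmemH g).1 hg x hxE)
  have hcard : Nat.card G = Nat.card Q * Nat.card H :=
    Subgroup.card_eq_card_quotient_mul_card_subgroup H
  have hcardQ_iff : Fintype.card Q = Fintype.card G ↔ H = ⊥ := by
    rw [← Nat.card_eq_fintype_card, ← Nat.card_eq_fintype_card, ← Subgroup.card_eq_one]
    constructor
    · intro h
      have hpos : 0 < Nat.card Q := Nat.card_pos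
      have := hcard
      rw [← h] at this
      nlinarith [this, hpos]
    · intro h
      rw [hcard, h, mul_one]
  constructor
  · intro ha
    have hHbot : H = ⊥ := hbot_iff.mpr ha
    constructor
    · rw [b2, b1]
      exact hcardQ_iff.mpr hHbot
    · -- compositum
      haveI : IsGalois ↥(FixedPoints.subfield G L) L := ⟨⟩
      set M : IntermediateField ↥(FixedPoints.subfield G L) L :=
        Subfield.toIntermediateField (E ⊔ F).toSubfield
          (fun x => le_sup_right (a := E) ((hmemF x.1).2 ((hmemFs x.1).1 x.2))) with hM
      have hfixM : IntermediateField.fixingSubgroup M = ⊥ := by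
        rw [eq_bot_iff]
        intro σ hσ
        obtain ⟨g, rfl⟩ := FixedPoints.toAlgAut_surjective G L σ
        rw [Subgroup.mem_bot]
        have hg : g ∈ H := (hmemH g).2 (fun x hx => hσ ⟨x, le_sup_left (b := F) hx⟩)
        rw [hHbot, Subgroup.mem_bot] at hg
        rw [hg, map_one]
      have hMtop : M = ⊤ := by
        have h1 := IsGalois.fixedField_fixingSubgroup M
        rw [hfixM] at h1
        rw [← h1]
        refine eq_top_iff.mpr fun x _ => ?_
        change x ∈ MulAction.fixedPoints _ _
        rw [MulAction.mem_fixedPoints]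
        rintro ⟨σ, hσ⟩
        rw [Subgroup.mem_bot] at hσ
        subst hσ
        exact one_smul _ x
      rw [eq_top_iff]
      intro x _
      have : x ∈ M := hMtop ▸ IntermediateField.mem_top
      exact this
  · rintro ⟨h1, -⟩
    refine hbot_iff.mp (hcardQ_iff.mp ?_)
    rw [← b2, ← b1]
    exact h1
end

section
/- Let K be a field and R a discrete valuation ring containing K (that is, R is a K-algebra which is a discrete valuation ring), with maximal ideal M. Let σ be a K-algebra automorphism of R whose order is finite and strictly greater than 1, and suppose the automorphisms induced by σ on R/M and on M/M² are the identity maps (equivalently: σ(x) − x ∈ M for all x ∈ R, and σ(x) − x ∈ M² for all x ∈ M). Then the characteristic of K is a prime number l > 0 and the order of σ equals l^r for some positive integer r. -/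
open IsLocalRing Finset

section Aux

variable {K : Type*} [Field K] {R : Type*} [CommRing R] [IsDomain R]
  [IsDiscreteValuationRing R] [Algebra K R]

/-- Powers of `σ` inherit the divisibility hypotheses. -/
lemma aux_pow_dvd (π : R) (σ : R ≃ₐ[K] R)
    (h0 : ∀ x : R, π ∣ σ x - x) (h1 : ∀ x : R, π ∣ x → π ^ 2 ∣ σ x - x) (j : ℕ) :
    (∀ x : R, π ∣ (σ ^ j) x - x) ∧ (∀ x : R, π ∣ x → π ^ 2 ∣ (σ ^ j) x - x) := by
  induction j with
  | zero => simp
  | succ j ih =>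
    obtain ⟨ih0, ih1⟩ := ih
    have hπj : π ∣ (σ ^ j) π := by
      have := ih0 π
      have : π ∣ ((σ ^ j) π - π) + π := dvd_add this dvd_rfl
      simpa using this
    have hmap : ∀ k : ℕ, ∀ y : R, π ^ k ∣ y → π ^ k ∣ (σ ^ j) y := by
      rintro k y ⟨c, rfl⟩
      rw [map_mul, map_pow]
      exact Dvd.dvd.mul_right (pow_dvd_pow_of_dvd hπj k) _
    have happ : ∀ x : R, (σ ^ (j + 1)) x = (σ ^ j) (σ x) := by
      intro x
      rw [pow_succ]
      rfl
    constructor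
    · intro x
      have hE : (σ ^ (j + 1)) x - x = (σ ^ j) (σ x - x) + ((σ ^ j) x - x) := by
        rw [map_sub, happ]; ring
      rw [hE]
      refine dvd_add ?_ (ih0 x)
      simpa using hmap 1 (σ x - x) (by simpa using h0 x)
    · intro x hx
      have hE : (σ ^ (j + 1)) x - x = (σ ^ j) (σ x - x) + ((σ ^ j) x - x) := by
        rw [map_sub, happ]; ring
      rw [hE]
      exact dvd_add (hmap 2 _ (h1 x hx)) (ih1 x hx)

/-- The graded claim: if `σ` is trivial mod `π` and mod `π²` on multiples of `π`,
then `σ y ≡ y mod π^(t+1)` for `y` a multiple of `π^t`. -/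
lemma aux_graded (π : R) (σ : R ≃ₐ[K] R)
    (h0 : ∀ x : R, π ∣ σ x - x) (h1 : ∀ x : R, π ∣ x → π ^ 2 ∣ σ x - x)
    (t : ℕ) (c : R) : π ^ (t + 1) ∣ σ (π ^ t * c) - π ^ t * c := by
  obtain ⟨s, hs⟩ := h1 π dvd_rfl
  have hv : σ π = π * (1 + π * s) := by linear_combination hs
  have key : σ (π ^ t * c) - π ^ t * c
      = π ^ t * (((1 + π * s) ^ t - 1) * σ c) + π ^ t * (σ c - c) := by
    rw [map_mul, map_pow, hv, mul_pow]; ring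
  rw [key, pow_succ]
  refine dvd_add ?_ (mul_dvd_mul_left _ (h0 c))
  refine mul_dvd_mul_left _ (dvd_mul_of_dvd_left ?_ _)
  have : (1 + π * s) - 1 ∣ (1 + π * s) ^ t - 1 ^ t := sub_dvd_pow_sub_pow _ _ t
  simp only [add_sub_cancel_left, one_pow] at this
  exact dvd_trans (dvd_mul_right π s) this

/-- Key lemma: a nontrivial automorphism satisfying the hypotheses killed by `n`
forces `(n : K) = 0`. -/
lemma aux_key (σ : R ≃ₐ[K] R)
    (h0 : ∀ x : R, σ x - x ∈ IsLocalRing.maximalIdeal R)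
    (h1 : ∀ x ∈ IsLocalRing.maximalIdeal R, σ x - x ∈ (IsLocalRing.maximalIdeal R) ^ 2)
    (n : ℕ) (hn : σ ^ n = 1) (hσ : σ ≠ 1) : (n : K) = 0 := by
  obtain ⟨π, hπ⟩ := IsDiscreteValuationRing.exists_irreducible R
  have hM : maximalIdeal R = Ideal.span {π} :=
    (IsDiscreteValuationRing.irreducible_iff_uniformizer π).mp hπ
  have hM2 : (maximalIdeal R) ^ 2 = Ideal.span {π ^ 2} := by
    rw [hM, Ideal.span_singleton_pow]
  have h0' : ∀ x : R, π ∣ σ x - x := by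
    intro x
    have := h0 x
    rwa [hM, Ideal.mem_span_singleton] at this
  have h1' : ∀ x : R, π ∣ x → π ^ 2 ∣ σ x - x := by
    intro x hx
    have := h1 x (by rwa [hM, Ideal.mem_span_singleton])
    rwa [hM2, Ideal.mem_span_singleton] at this
  -- pick a moved element
  have hex : ∃ x : R, σ x ≠ x := by
    by_contra h
    push_neg at h
    exact hσ (AlgEquiv.ext fun x => by simpa using h x)
  obtain ⟨x, hx⟩ := hex
  set d : R := σ x - x with hd
  have hd0 : d ≠ 0 := sub_ne_zero.mpr hx
  obtain ⟨w, u, hdu⟩ := IsDiscreteValuationRing.eq_unit_mul_pow_irreducible hd0 hπ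
  -- telescoping sum
  have hterm : ∀ j : ℕ, (σ ^ (j + 1)) x - (σ ^ j) x = (σ ^ j) d := by
    intro j
    have happ : (σ ^ (j + 1)) x = (σ ^ j) (σ x) := by rw [pow_succ]; rfl
    rw [happ, hd, map_sub]
  have hsum : ∑ j ∈ range n, (σ ^ j) d = 0 := by
    have := Finset.sum_range_sub (fun j => (σ ^ j) x) n
    simp only [hterm] at this
    rw [this, hn]
    simp
  -- each difference is highly divisible
  have hdiff : ∀ j : ℕ, π ^ (w + 1) ∣ (σ ^ j) d - d := by
    intro j
    obtain ⟨hj0, hj1⟩ := aux_pow_dvd π σ h0' h1' j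
    have := aux_graded π (σ ^ j) hj0 hj1 w (u : R)
    rwa [show π ^ w * (u : R) = d by rw [hdu]; ring] at this
  have hmain : π ^ (w + 1) ∣ (n : R) * d := by
    have hE : (n : R) * d = -∑ j ∈ range n, ((σ ^ j) d - d) := by
      rw [Finset.sum_sub_distrib, hsum, Finset.sum_const, Finset.card_range]
      simp [nsmul_eq_mul]
    rw [hE, dvd_neg]
    exact Finset.dvd_sum fun j _ => hdiff j
  -- extract π ∣ (n : R)
  have hπn : π ∣ (n : R) := by
    have h1d : π ^ (w + 1) ∣ π ^ w * ((n : R) * (u : R)) := by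
      have : (n : R) * d = π ^ w * ((n : R) * (u : R)) := by rw [hdu]; ring
      rwa [this] at hmain
    rw [pow_succ] at h1d
    have hπw : (π : R) ^ w ≠ 0 := pow_ne_zero _ hπ.ne_zero
    have hdvd : π ∣ (n : R) * (u : R) := (mul_dvd_mul_iff_left hπw).mp h1d
    exact (Units.dvd_mul_right).mp hdvd
  -- conclude
  by_contra hnK
  have hunit : IsUnit ((n : R)) := by
    have : (algebraMap K R) ((n : K)) = (n : R) := map_natCast _ n
    rw [← this]
    exact (isUnit_iff_ne_zero.mpr hnK).map (algebraMap K R)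
  exact hπ.not_isUnit (isUnit_of_dvd_unit hπn hunit)

/-- Ideal-form power stability. -/
lemma aux_pow_mem (σ : R ≃ₐ[K] R)
    (h0 : ∀ x : R, σ x - x ∈ IsLocalRing.maximalIdeal R)
    (h1 : ∀ x ∈ IsLocalRing.maximalIdeal R, σ x - x ∈ (IsLocalRing.maximalIdeal R) ^ 2)
    (j : ℕ) :
    (∀ x : R, (σ ^ j) x - x ∈ IsLocalRing.maximalIdeal R) ∧
      (∀ x ∈ IsLocalRing.maximalIdeal R, (σ ^ j) x - x ∈ (IsLocalRing.maximalIdeal R) ^ 2) := by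
  obtain ⟨π, hπ⟩ := IsDiscreteValuationRing.exists_irreducible R
  have hM : maximalIdeal R = Ideal.span {π} :=
    (IsDiscreteValuationRing.irreducible_iff_uniformizer π).mp hπ
  have hM2 : (maximalIdeal R) ^ 2 = Ideal.span {π ^ 2} := by
    rw [hM, Ideal.span_singleton_pow]
  have h0' : ∀ x : R, π ∣ σ x - x := by
    intro x; have := h0 x; rwa [hM, Ideal.mem_span_singleton] at this
  have h1' : ∀ x : R, π ∣ x → π ^ 2 ∣ σ x - x := by
    intro x hx
    have := h1 x (by rwa [hM, Ideal.mem_span_singleton])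
    rwa [hM2, Ideal.mem_span_singleton] at this
  obtain ⟨hj0, hj1⟩ := aux_pow_dvd π σ h0' h1' j
  refine ⟨fun x => ?_, fun x hx => ?_⟩
  · rw [hM, Ideal.mem_span_singleton]; exact hj0 x
  · rw [hM2, Ideal.mem_span_singleton]
    exact hj1 x (by rwa [hM, Ideal.mem_span_singleton] at hx)

end Aux

/-- Let `R` be a discrete valuation ring containing a field `K`, with maximal ideal `M`.
If a `K`-algebra automorphism `σ` of `R` has finite order `> 1` and induces the identity
on `R/M` (i.e. `σ x − x ∈ M` for all `x ∈ R`) and on `M/M²` (i.e. `σ x − x ∈ M²` for all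
`x ∈ M`), then `char K = l` is a prime `l > 0` and the order of `σ` is `l^r` for some
`r ≥ 1`. -/
theorem orderOf_eq_charP_pow_of_trivial_on_residue (K : Type*) [Field K]
    (R : Type*) [CommRing R] [IsDomain R] [IsDiscreteValuationRing R] [Algebra K R]
    (σ : R ≃ₐ[K] R) (hfin : IsOfFinOrder σ) (hord : 1 < orderOf σ)
    (h0 : ∀ x : R, σ x - x ∈ IsLocalRing.maximalIdeal R)
    (h1 : ∀ x ∈ IsLocalRing.maximalIdeal R, σ x - x ∈ (IsLocalRing.maximalIdeal R) ^ 2) :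
    (ringChar K).Prime ∧ ∃ r : ℕ, 0 < r ∧ orderOf σ = ringChar K ^ r := by
  set n := orderOf σ with hn
  have hn0 : n ≠ 0 := hfin.orderOf_pos.ne'
  have hσ1 : σ ≠ 1 := by
    intro h
    have h1' : orderOf σ = 1 := by rw [h, orderOf_one]
    omega
  have hKn : (n : K) = 0 := aux_key σ h0 h1 n (pow_orderOf_eq_one σ) hσ1
  set p := ringChar K with hp
  haveI : CharP K p := ringChar.charP K
  have hpn : p ∣ n := (CharP.cast_eq_zero_iff K p n).mp hKn
  have hpne : p ≠ 0 := by
    intro h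
    rw [h] at hpn
    exact hn0 (zero_dvd_iff.mp hpn)
  have hprime : p.Prime := (CharP.char_is_prime_or_zero K p).resolve_right hpne
  refine ⟨hprime, ?_⟩
  have hnm : p ^ n.factorization p * (n / p ^ n.factorization p) = n :=
    Nat.ordProj_mul_ordCompl_eq_self n p
  have hm1 : n / p ^ n.factorization p = 1 := by
    by_contra hm1
    have hmpos : 0 < n / p ^ n.factorization p := Nat.ordCompl_pos p hn0
    have horder : orderOf (σ ^ p ^ n.factorization p) = n / p ^ n.factorization p := by
      rw [orderOf_pow' σ (pow_ne_zero _ hpne), ← hn, Nat.gcd_comm,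
        Nat.gcd_eq_left (Nat.ordProj_dvd n p)]
    have hτ1 : σ ^ p ^ n.factorization p ≠ 1 := by
      intro h
      rw [h, orderOf_one] at horder
      omega
    obtain ⟨hτ0, hτ1'⟩ := aux_pow_mem σ h0 h1 (p ^ n.factorization p)
    have hτm : (σ ^ p ^ n.factorization p) ^ (n / p ^ n.factorization p) = 1 := by
      rw [← pow_mul, hnm]
      exact pow_orderOf_eq_one σ
    have hKm : ((n / p ^ n.factorization p : ℕ) : K) = 0 :=
      aux_key (σ ^ p ^ n.factorization p) hτ0 hτ1' _ hτm hτ1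
    have : p ∣ n / p ^ n.factorization p := (CharP.cast_eq_zero_iff K p _).mp hKm
    exact Nat.not_dvd_ordCompl hprime hn0 this
  have hnpk : n = p ^ n.factorization p := by
    conv_lhs => rw [← hnm]
    rw [hm1, mul_one]
  have hkpos : 0 < n.factorization p := by
    rcases Nat.eq_zero_or_pos (n.factorization p) with hk0 | hk0
    · rw [hk0, pow_zero] at hnpk
      omega
    · exact hk0
  exact ⟨n.factorization p, hkpos, hnpk⟩
end

section
/- Let K be a field and R a discrete valuation ring containing K, with maximal ideal M. Let G be a finite group of K-algebra automorphisms of R. Define G₀ = {σ ∈ G : σ(x) − x ∈ M for all x ∈ R} and G₁ = {σ ∈ G₀ : σ(x) − x ∈ M² for all x ∈ M}. Assume that K is algebraically closed in the residue field R/M, i.e., every element of R/M that is algebraic over K lies in the image of K in R/M. Then: (i) τστ⁻¹σ⁻¹ ∈ G₁ for every τ ∈ G and every σ ∈ G₀; (ii) G₁ is a normal subgroup of G₀ and the quotient group G₀/G₁ is cyclic; (iii) if m is the order of G₀/G₁, then K contains a primitive m-th root of unity (in particular, the characteristic of K does not divide m). -/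
noncomputable section

open IsLocalRing

variable (K : Type*) [Field K] (R : Type*) [CommRing R] [IsDomain R]
  [IsDiscreteValuationRing R] [Algebra K R]

/-- `G₀`: the subgroup of elements of `G` inducing the identity automorphism on the
residue field `R/M`, i.e. those `σ` with `σ x − x ∈ M` for all `x ∈ R`. -/
def inertiaOne (G : Subgroup (R ≃ₐ[K] R)) : Subgroup (R ≃ₐ[K] R) where
  carrier := {σ | σ ∈ G ∧ ∀ x : R, σ x - x ∈ maximalIdeal R}
  one_mem' := ⟨G.one_mem, fun x => by simp⟩
  mul_mem' := by
    rintro a b ⟨haG, ha⟩ ⟨hbG, hb⟩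
    refine ⟨G.mul_mem haG hbG, fun x => ?_⟩
    have h : (a * b) x - x = (a (b x) - b x) + (b x - x) := by
      rw [AlgEquiv.mul_apply]; ring
    rw [h]
    exact Ideal.add_mem _ (ha _) (hb x)
  inv_mem' := by
    rintro a ⟨haG, ha⟩
    refine ⟨G.inv_mem haG, fun x => ?_⟩
    have h2 : a (a⁻¹ x) = x := by
      rw [← AlgEquiv.mul_apply, mul_inv_cancel, AlgEquiv.one_apply]
    have h : a⁻¹ x - x = -(a (a⁻¹ x) - a⁻¹ x) := by rw [h2]; ring
    rw [h]
    exact neg_mem (ha _)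

lemma mem_inertiaOne {G : Subgroup (R ≃ₐ[K] R)} {σ : R ≃ₐ[K] R} :
    σ ∈ inertiaOne K R G ↔ σ ∈ G ∧ ∀ x : R, σ x - x ∈ maximalIdeal R :=
  Iff.rfl

/-- `G₁`: the subgroup of elements of `G₀` additionally inducing the identity on
`M/M²`, i.e. those `σ ∈ G₀` with `σ x − x ∈ M²` for all `x ∈ M`. -/
def inertiaTwo (G : Subgroup (R ≃ₐ[K] R)) : Subgroup (R ≃ₐ[K] R) where
  carrier := {σ | σ ∈ inertiaOne K R G ∧
    ∀ x ∈ maximalIdeal R, σ x - x ∈ (maximalIdeal R) ^ 2}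
  one_mem' := ⟨(inertiaOne K R G).one_mem, fun x _ => by simp⟩
  mul_mem' := by
    rintro a b ⟨haG, ha⟩ ⟨hbG, hb⟩
    refine ⟨(inertiaOne K R G).mul_mem haG hbG, fun x hx => ?_⟩
    have hbx : b x ∈ maximalIdeal R := by
      have h2 : b x = (b x - x) + x := by ring
      rw [h2]
      exact Ideal.add_mem _ (Ideal.pow_le_self two_ne_zero (hb x hx)) hx
    have h : (a * b) x - x = (a (b x) - b x) + (b x - x) := by
      rw [AlgEquiv.mul_apply]; ring
    rw [h]
    exact Ideal.add_mem _ (ha _ hbx) (hb x hx)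
  inv_mem' := by
    rintro a ⟨haG, ha⟩
    refine ⟨(inertiaOne K R G).inv_mem haG, fun x hx => ?_⟩
    have h0 : ∀ y : R, a⁻¹ y - y ∈ maximalIdeal R :=
      ((mem_inertiaOne K R).mp ((inertiaOne K R G).inv_mem haG)).2
    have hax : a⁻¹ x ∈ maximalIdeal R := by
      have h2 : a⁻¹ x = (a⁻¹ x - x) + x := by ring
      rw [h2]
      exact Ideal.add_mem _ (h0 x) hx
    have h2 : a (a⁻¹ x) = x := by
      rw [← AlgEquiv.mul_apply, mul_inv_cancel, AlgEquiv.one_apply]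
    have h : a⁻¹ x - x = -(a (a⁻¹ x) - a⁻¹ x) := by rw [h2]; ring
    rw [h]
    exact neg_mem (ha _ hax)

lemma mem_inertiaTwo' {G : Subgroup (R ≃ₐ[K] R)} {σ : R ≃ₐ[K] R} :
    σ ∈ inertiaTwo K R G ↔ σ ∈ inertiaOne K R G ∧
      ∀ x ∈ maximalIdeal R, σ x - x ∈ (maximalIdeal R) ^ 2 :=
  Iff.rfl

/-- Lemma 4.3: let `R` be a DVR containing a field `K`, `G` a finite group of
`K`-algebra automorphisms of `R`, and assume `K` is algebraically closed in the residue
field `R/M`.  Then (i) `τστ⁻¹σ⁻¹ ∈ G₁` for all `τ ∈ G`, `σ ∈ G₀`; (ii) `G₁` is normal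
in `G₀` with cyclic quotient `G₀/G₁`; (iii) if `m = |G₀/G₁|` then `K` contains a
primitive `m`-th root of unity (in particular `char K ∤ m`). -/
theorem inertia_commutator_cyclic_quotient (G : Subgroup (R ≃ₐ[K] R)) [Finite G]
    (halg : ∀ x : ResidueField R, IsAlgebraic K x → x ∈ (algebraMap K (ResidueField R)).range) :
    (∀ τ ∈ G, ∀ σ ∈ inertiaOne K R G, τ * σ * τ⁻¹ * σ⁻¹ ∈ inertiaTwo K R G) ∧
    ∃ hN : ((inertiaTwo K R G).subgroupOf (inertiaOne K R G)).Normal,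
      haveI := hN
      IsCyclic (↥(inertiaOne K R G) ⧸ (inertiaTwo K R G).subgroupOf (inertiaOne K R G)) ∧
      (∃ ζ : K, IsPrimitiveRoot ζ
        (Nat.card (↥(inertiaOne K R G) ⧸ (inertiaTwo K R G).subgroupOf (inertiaOne K R G)))) ∧
      ¬ ringChar K ∣
        Nat.card (↥(inertiaOne K R G) ⧸ (inertiaTwo K R G).subgroupOf (inertiaOne K R G)) := by
  classical
  obtain ⟨π, hπ⟩ := IsDiscreteValuationRing.exists_irreducible R
  have hπ0 : π ≠ 0 := hπ.ne_zero
  have hspan : maximalIdeal R = Ideal.span {π} :=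
    (IsDiscreteValuationRing.irreducible_iff_uniformizer π).mp hπ
  have hπM : π ∈ maximalIdeal R := by
    rw [hspan]; exact Ideal.mem_span_singleton_self π
  have hmapM : ∀ (σ : R ≃ₐ[K] R) {x : R}, x ∈ maximalIdeal R → σ x ∈ maximalIdeal R := by
    intro σ x hx
    rw [IsLocalRing.mem_maximalIdeal, mem_nonunits_iff] at hx ⊢
    intro h
    apply hx
    have h2 := h.map σ.symm
    simpa using h2
  have hresid : ∀ {x y : R}, x - y ∈ maximalIdeal R → residue R x = residue R y := by
    intro x y h
    exact Ideal.Quotient.eq.mpr h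
  have hresid' : ∀ {x y : R}, residue R x = residue R y → x - y ∈ maximalIdeal R := by
    intro x y h
    exact Ideal.Quotient.eq.mp h
  have hu_ex : ∀ σ : R ≃ₐ[K] R, ∃ c : R, σ π = c * π := by
    intro σ
    have hM : σ π ∈ maximalIdeal R := hmapM σ hπM
    rw [hspan, Ideal.mem_span_singleton] at hM
    obtain ⟨c, hc⟩ := hM
    exact ⟨c, by rw [hc, mul_comm]⟩
  choose u hu using hu_ex
  have hcancel : ∀ {a b : R}, a * π = b * π → a = b := by
    intro a b h; exact mul_right_cancel₀ hπ0 h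
  have hu1 : u 1 = 1 := by
    apply hcancel
    rw [← hu 1, AlgEquiv.one_apply, one_mul]
  have humul : ∀ σ τ : R ≃ₐ[K] R, u (σ * τ) = σ (u τ) * u σ := by
    intro σ τ
    apply hcancel
    rw [← hu (σ * τ), AlgEquiv.mul_apply, hu τ, map_mul, hu σ, mul_assoc]
  have hres : ∀ {σ : R ≃ₐ[K] R}, σ ∈ inertiaOne K R G → ∀ x : R,
      residue R (σ x) = residue R x := by
    intro σ hσ x
    exact hresid (((mem_inertiaOne K R).mp hσ).2 x)
  haveI hfin : Finite (inertiaOne K R G) :=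
    Finite.of_injective (Subgroup.inclusion (fun σ hσ => ((mem_inertiaOne K R).mp hσ).1))
      (Subgroup.inclusion_injective _)
  let θ : (inertiaOne K R G) →* ResidueField R :=
    { toFun := fun σ => residue R (u σ.1)
      map_one' := by
        show residue R (u ((1 : inertiaOne K R G) : R ≃ₐ[K] R)) = 1
        rw [OneMemClass.coe_one, hu1, map_one]
      map_mul' := by
        intro σ τ
        show residue R (u (σ.1 * τ.1)) = residue R (u σ.1) * residue R (u τ.1)
        rw [humul, map_mul, hres σ.2 (u τ.1)]
        exact mul_comm _ _ }
  let Θ : (inertiaOne K R G) →* (ResidueField R)ˣ := θ.toHomUnits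
  have hΘval : ∀ σ : (inertiaOne K R G), (Θ σ : ResidueField R) = residue R (u σ.1) := by
    intro σ; rfl
  have hM2 : ∀ {σ : R ≃ₐ[K] R}, σ ∈ inertiaOne K R G →
      (residue R (u σ) = 1 ↔ ∀ x ∈ maximalIdeal R, σ x - x ∈ maximalIdeal R ^ 2) := by
    intro σ hσ
    constructor
    · intro h x hx
      have h1 : u σ - 1 ∈ maximalIdeal R := by
        apply hresid'
        rw [map_one]; exact h
      obtain ⟨c, hc⟩ : ∃ c, x = c * π := by
        rw [hspan, Ideal.mem_span_singleton] at hx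
        obtain ⟨c, hc⟩ := hx
        exact ⟨c, by rw [hc, mul_comm]⟩
      have hkey : σ x - x = (σ c * (u σ - 1) + (σ c - c)) * π := by
        rw [hc, map_mul, hu σ]; ring
      rw [hkey, pow_two]
      exact Ideal.mul_mem_mul
        (Ideal.add_mem _ (Ideal.mul_mem_left _ _ h1) (((mem_inertiaOne K R).mp hσ).2 c)) hπM
    · intro h
      have h2 := h π hπM
      have hkey : σ π - π = (u σ - 1) * π := by rw [hu σ]; ring
      rw [hkey, pow_two, hspan, Ideal.span_singleton_mul_span_singleton,
        Ideal.mem_span_singleton] at h2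
      obtain ⟨d, hd⟩ := h2
      have hud : u σ - 1 = π * d := by
        apply hcancel
        rw [hd]; ring
      have h1 : u σ - 1 ∈ maximalIdeal R := by
        rw [hspan, Ideal.mem_span_singleton]
        exact ⟨d, hud⟩
      have := hresid h1
      rwa [map_one] at this
  have hmem2 : ∀ {σ : R ≃ₐ[K] R}, σ ∈ inertiaOne K R G →
      (σ ∈ inertiaTwo K R G ↔ residue R (u σ) = 1) := by
    intro σ hσ
    rw [mem_inertiaTwo']
    constructor
    · intro h; exact (hM2 hσ).mpr h.2
    · intro h; exact ⟨hσ, (hM2 hσ).mp h⟩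
  have hker : (inertiaTwo K R G).subgroupOf (inertiaOne K R G) = Θ.ker := by
    ext σ
    rw [Subgroup.mem_subgroupOf, MonoidHom.mem_ker, Units.ext_iff]
    exact hmem2 σ.2
  have hcard0 : 0 < Nat.card (inertiaOne K R G) := Nat.card_pos
  have hrange : ∀ σ : (inertiaOne K R G), ∃ k : K,
      algebraMap K (ResidueField R) k = residue R (u σ.1) := by
    intro σ
    have hpow : (residue R (u σ.1)) ^ (Nat.card (inertiaOne K R G)) = 1 := by
      have h : θ σ ^ Nat.card (inertiaOne K R G) = 1 := by
        rw [← map_pow, pow_card_eq_one', map_one]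
      exact h
    have halgθ : IsAlgebraic K (residue R (u σ.1)) := by
      refine ⟨Polynomial.X ^ Nat.card (inertiaOne K R G) - Polynomial.C 1, ?_, ?_⟩
      · exact (Polynomial.monic_X_pow_sub_C (1 : K) hcard0.ne').ne_zero
      · simp [hpow]
    obtain ⟨k, hk⟩ := halg _ halgθ
    exact ⟨k, hk⟩
  have hτfix : ∀ (τ : R ≃ₐ[K] R) (σ : R ≃ₐ[K] R), σ ∈ inertiaOne K R G →
      residue R (τ (u σ)) = residue R (u σ) := by
    intro τ σ hσ
    obtain ⟨k, hk⟩ := hrange ⟨σ, hσ⟩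
    have hk' : residue R (algebraMap K R k) = residue R (u σ) := hk
    have h1 : u σ - algebraMap K R k ∈ maximalIdeal R := hresid' hk'.symm
    have h2 : τ (u σ) - algebraMap K R k ∈ maximalIdeal R := by
      have h3 := hmapM τ h1
      rwa [map_sub, AlgEquiv.commutes] at h3
    exact (hresid h2).trans hk'
  have hinv_apply : ∀ (τ : R ≃ₐ[K] R) (y : R), τ (τ⁻¹ y) = y := by
    intro τ y
    rw [← AlgEquiv.mul_apply, mul_inv_cancel, AlgEquiv.one_apply]
  have hG0conj : ∀ τ ∈ G, ∀ σ ∈ inertiaOne K R G, τ * σ * τ⁻¹ ∈ inertiaOne K R G := by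
    intro τ hτ σ hσ
    obtain ⟨hσG, hσM⟩ := (mem_inertiaOne K R).mp hσ
    refine (mem_inertiaOne K R).mpr ⟨G.mul_mem (G.mul_mem hτ hσG) (G.inv_mem hτ), fun x => ?_⟩
    have hx : (τ * σ * τ⁻¹) x - x = τ (σ (τ⁻¹ x) - τ⁻¹ x) := by
      rw [AlgEquiv.mul_apply, AlgEquiv.mul_apply, map_sub, hinv_apply]
    rw [hx]
    exact hmapM τ (hσM _)
  have hprod1 : ∀ τ : R ≃ₐ[K] R, residue R (τ (u τ⁻¹)) * residue R (u τ) = 1 := by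
    intro τ
    have h := humul τ τ⁻¹
    rw [mul_inv_cancel, hu1] at h
    rw [← map_mul, ← h, map_one]
  have parti : ∀ τ ∈ G, ∀ σ ∈ inertiaOne K R G,
      τ * σ * τ⁻¹ * σ⁻¹ ∈ inertiaTwo K R G := by
    intro τ hτ σ hσ
    have hA : τ * σ * τ⁻¹ ∈ inertiaOne K R G := hG0conj τ hτ σ hσ
    have hσinv : σ⁻¹ ∈ inertiaOne K R G := (inertiaOne K R G).inv_mem hσ
    have hc : τ * σ * τ⁻¹ * σ⁻¹ ∈ inertiaOne K R G :=
      (inertiaOne K R G).mul_mem hA hσinv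
    refine (hmem2 hc).mpr ?_
    have e1 : u (τ * σ * τ⁻¹ * σ⁻¹) = (τ * σ * τ⁻¹) (u σ⁻¹) * u (τ * σ * τ⁻¹) := humul _ _
    have e2 : u (τ * σ * τ⁻¹) = (τ * σ) (u τ⁻¹) * u (τ * σ) := humul _ _
    have e3 : u (τ * σ) = τ (u σ) * u τ := humul _ _
    have r1 : residue R ((τ * σ * τ⁻¹) (u σ⁻¹)) = residue R (u σ⁻¹) := hres hA _
    have r2 : residue R ((τ * σ) (u τ⁻¹)) = residue R (τ (u τ⁻¹)) := by
      rw [AlgEquiv.mul_apply]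
      apply hresid
      have h3 := hmapM τ (((mem_inertiaOne K R).mp hσ).2 (u τ⁻¹))
      rwa [map_sub] at h3
    have r3 : residue R (τ (u σ)) = residue R (u σ) := hτfix τ σ hσ
    have r4 : residue R (u σ⁻¹) * residue R (u σ) = 1 := by
      have h := humul σ⁻¹ σ
      rw [inv_mul_cancel, hu1] at h
      have h5 : residue R (σ⁻¹ (u σ) * u σ⁻¹) = 1 := by rw [← h, map_one]
      rw [map_mul, hres hσinv] at h5
      rw [mul_comm]; exact h5
    calc residue R (u (τ * σ * τ⁻¹ * σ⁻¹))
        = residue R (u σ⁻¹) * (residue R (τ (u τ⁻¹)) *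
            (residue R (u σ) * residue R (u τ))) := by
          rw [e1, map_mul, r1, e2, map_mul, r2, e3, map_mul, r3]
      _ = (residue R (u σ⁻¹) * residue R (u σ)) *
            (residue R (τ (u τ⁻¹)) * residue R (u τ)) := by ring
      _ = 1 := by rw [r4, hprod1, one_mul]
  refine ⟨parti, ?_⟩
  rw [hker]
  haveI hQfin : Finite ((inertiaOne K R G) ⧸ Θ.ker) := Quotient.finite _
  have hcoeinj : Function.Injective (Units.coeHom (ResidueField R)) := by
    intro a b hab; exact Units.ext hab
  have hcyc : IsCyclic ((inertiaOne K R G) ⧸ Θ.ker) :=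
    isCyclic_of_subgroup_isDomain
      ((Units.coeHom (ResidueField R)).comp (QuotientGroup.kerLift Θ))
      (hcoeinj.comp (QuotientGroup.kerLift_injective Θ))
  -- find a primitive root
  set m := Nat.card ((inertiaOne K R G) ⧸ Θ.ker) with hm
  have hm0 : 0 < m := Nat.card_pos
  obtain ⟨g, hg⟩ := hcyc.exists_generator
  have horder : orderOf g = m := orderOf_eq_card_of_forall_mem_zpowers hg
  obtain ⟨σ₀, hσ₀⟩ := QuotientGroup.mk'_surjective Θ.ker g
  obtain ⟨ζ, hζval⟩ := hrange σ₀
  have einj : Function.Injective (algebraMap K (ResidueField R)) :=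
    (algebraMap K (ResidueField R)).injective
  have hfg : (QuotientGroup.kerLift Θ g : ResidueField R) = algebraMap K (ResidueField R) ζ := by
    rw [← hσ₀]
    have : QuotientGroup.kerLift Θ (QuotientGroup.mk' Θ.ker σ₀) = Θ σ₀ :=
      QuotientGroup.kerLift_mk Θ σ₀
    rw [this, hΘval σ₀, hζval]
  have hζpow : ∀ l : ℕ, ζ ^ l = 1 ↔ g ^ l = 1 := by
    intro l
    constructor
    · intro h
      apply QuotientGroup.kerLift_injective Θ
      rw [map_pow, map_one]
      apply Units.ext
      rw [Units.val_pow_eq_pow_val, hfg, ← map_pow, h, map_one, Units.val_one]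
    · intro h
      apply einj
      rw [map_pow, ← hfg, map_one]
      rw [← Units.val_pow_eq_pow_val, ← map_pow, h, map_one, Units.val_one]
  have hprim : IsPrimitiveRoot ζ m := by
    constructor
    · rw [hζpow, ← horder, pow_orderOf_eq_one]
    · intro l hl
      rw [← horder]
      exact orderOf_dvd_of_pow_eq_one ((hζpow l).mp hl)
  refine ⟨MonoidHom.normal_ker Θ, hcyc, ⟨ζ, hprim⟩, ?_⟩
  -- characteristic does not divide m
  intro hdvd
  haveI : CharP K (ringChar K) := ringChar.charP K
  rcases CharP.char_is_prime_or_zero K (ringChar K) with hp | hp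
  · haveI : Fact (Nat.Prime (ringChar K)) := ⟨hp⟩
    obtain ⟨d, hd⟩ := hdvd
    have hd0 : d ≠ 0 := by
      intro h; rw [h, mul_zero] at hd; omega
    have hpow : (ζ ^ d) ^ ringChar K = 1 := by
      rw [← pow_mul, mul_comm d (ringChar K), ← hd, hprim.pow_eq_one]
    have hζd : ζ ^ d = 1 := by
      have h1 : (ζ ^ d - 1) ^ ringChar K = 0 := by
        rw [sub_pow_char, hpow, one_pow, sub_self]
      have h2 := pow_eq_zero_iff (n := ringChar K) hp.ne_zero |>.mp h1
      exact sub_eq_zero.mp h2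
    have hdvd2 : m ∣ d := hprim.dvd_of_pow_eq_one d hζd
    have hle : m ≤ d := Nat.le_of_dvd (Nat.pos_of_ne_zero hd0) hdvd2
    have h2 : 2 ≤ ringChar K := hp.two_le
    nlinarith [hd, hle, h2, Nat.pos_of_ne_zero hd0]
  · rw [hp] at hdvd
    rw [zero_dvd_iff] at hdvd
    omega
end
end

section
/- Let K be an arbitrary field and let σ be an element of the projective general linear group PGL₂(K) (the quotient of GL₂(K) by its center, the subgroup of scalar matrices) of finite order n, and suppose the characteristic of K does not divide n. Then there exists a primitive n-th root of unity ζ in an algebraic closure of K such that ζ + ζ⁻¹ lies in (the image of) K. -/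
open Matrix Polynomial

-- Cayley-Hamilton for 2x2
theorem ch2 {R : Type*} [CommRing R] (M : Matrix (Fin 2) (Fin 2) R) :
    M * M - M.trace • M + M.det • (1 : Matrix (Fin 2) (Fin 2) R) = 0 := by
  ext i j
  fin_cases i <;> fin_cases j <;>
    simp [Matrix.mul_apply, Fin.sum_univ_two, Matrix.trace_fin_two, Matrix.det_fin_two,
      Matrix.one_apply] <;> ring

theorem scalar_mem_center {K : Type*} [Field K] (M : GL (Fin 2) K) (c : K)
    (h : (M : Matrix (Fin 2) (Fin 2) K) = c • 1) :
    M ∈ Subgroup.center (GL (Fin 2) K) := by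
  rw [Subgroup.mem_center_iff]
  intro g
  ext : 1
  show (g : Matrix (Fin 2) (Fin 2) K) * M = (M : Matrix (Fin 2) (Fin 2) K) * g
  rw [h, mul_smul_comm, smul_mul_assoc, mul_one, one_mul]

theorem center_GL2_scalar {K : Type*} [Field K] (M : GL (Fin 2) K)
    (hM : M ∈ Subgroup.center (GL (Fin 2) K)) :
    ∃ c : K, (M : Matrix (Fin 2) (Fin 2) K) = c • 1 := by
  rw [Subgroup.mem_center_iff] at hM
  set m : Matrix (Fin 2) (Fin 2) K := (M : Matrix (Fin 2) (Fin 2) K) with hm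
  have hU1 : (!![1,1;0,1] : Matrix (Fin 2) (Fin 2) K) * !![1,-1;0,1] = 1 := by
    ext i j; fin_cases i <;> fin_cases j <;> simp [Matrix.mul_apply, Fin.sum_univ_two]
  have hU1' : (!![1,-1;0,1] : Matrix (Fin 2) (Fin 2) K) * !![1,1;0,1] = 1 := by
    ext i j; fin_cases i <;> fin_cases j <;> simp [Matrix.mul_apply, Fin.sum_univ_two]
  have hU2 : (!![1,0;1,1] : Matrix (Fin 2) (Fin 2) K) * !![1,0;-1,1] = 1 := by
    ext i j; fin_cases i <;> fin_cases j <;> simp [Matrix.mul_apply, Fin.sum_univ_two]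
  have hU2' : (!![1,0;-1,1] : Matrix (Fin 2) (Fin 2) K) * !![1,0;1,1] = 1 := by
    ext i j; fin_cases i <;> fin_cases j <;> simp [Matrix.mul_apply, Fin.sum_univ_two]
  have h1 := congrArg Units.val (hM ⟨!![1,1;0,1], !![1,-1;0,1], hU1, hU1'⟩)
  have h2 := congrArg Units.val (hM ⟨!![1,0;1,1], !![1,0;-1,1], hU2, hU2'⟩)
  simp only [Units.val_mul] at h1 h2
  have e1 : (!![1,1;0,1] : Matrix (Fin 2) (Fin 2) K) * m = m * !![1,1;0,1] := h1
  have e2 : (!![1,0;1,1] : Matrix (Fin 2) (Fin 2) K) * m = m * !![1,0;1,1] := h2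
  have a1 := congrFun (congrFun e1 0) 0
  have a2 := congrFun (congrFun e1 0) 1
  have a3 := congrFun (congrFun e2 0) 0
  simp [Matrix.mul_apply, Fin.sum_univ_two] at a1 a2 a3
  refine ⟨m 0 0, ?_⟩
  ext i j
  fin_cases i <;> fin_cases j <;> simp [Matrix.one_apply]
  · linear_combination a3
  · linear_combination a1
  · linear_combination a2
section
variable {K : Type*} [Field K]

-- geometric series scalar lemma: B^k * P = lam^k • P given B * P = lam • P
theorem pow_smul_aux {L : Type*} [Field L] (B P : Matrix (Fin 2) (Fin 2) L) (lam : L)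
    (h : B * P = lam • P) : ∀ k : ℕ, B ^ k * P = lam ^ k • P := by
  intro k
  induction k with
  | zero => simp
  | succ k ih =>
    rw [pow_succ, pow_succ, mul_assoc, h, mul_smul_comm, ih, smul_smul, mul_comm]

-- binomial for square-zero
theorem one_add_sq_zero_pow {L : Type*} [Field L] (N : Matrix (Fin 2) (Fin 2) L)
    (hN : N * N = 0) : ∀ k : ℕ, (1 + N) ^ k = 1 + (k : L) • N := by
  intro k
  induction k with
  | zero => simp
  | succ k ih =>
    rw [pow_succ, ih]
    push_cast
    rw [add_mul, one_mul, mul_add, mul_one, smul_mul_assoc, hN, smul_zero, add_zero,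
      add_smul, one_smul]
    abel
end

/-- `PGL₂(K)`: the quotient of `GL₂(K)` by its center (the subgroup of scalar
matrices). -/
abbrev PGL2 (K : Type*) [Field K] : Type _ :=
  GL (Fin 2) K ⧸ Subgroup.center (GL (Fin 2) K)

set_option maxHeartbeats 2000000

/-- Let `K` be an arbitrary field and `σ ∈ PGL₂(K)` an element of finite order `n` with
`char K ∤ n`.  Then there is a primitive `n`-th root of unity `ζ` in an algebraic
closure of `K` such that `ζ + ζ⁻¹` lies in (the image of) `K`. -/
theorem PGL2_primitiveRoot_add_inv_mem (K : Type*) [Field K] (σ : PGL2 K) (n : ℕ)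
    (hn : 0 < n) (hord : orderOf σ = n) (hchar : ¬ ringChar K ∣ n) :
    ∃ ζ : AlgebraicClosure K, IsPrimitiveRoot ζ n ∧
      ζ + ζ⁻¹ ∈ (algebraMap K (AlgebraicClosure K)).range := by
  obtain ⟨A, rfl⟩ := QuotientGroup.mk'_surjective (Subgroup.center (GL (Fin 2) K)) σ
  -- A^n is central, hence scalar
  have hσn : (QuotientGroup.mk' (Subgroup.center (GL (Fin 2) K)) A) ^ n = 1 := by
    rw [← hord]; exact pow_orderOf_eq_one _
  have hAn : A ^ n ∈ Subgroup.center (GL (Fin 2) K) := by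
    rw [← QuotientGroup.eq_one_iff]
    rw [← map_pow] at hσn
    exact hσn
  obtain ⟨c, hc⟩ := center_GL2_scalar (A ^ n) hAn
  have hc' : ((A : Matrix (Fin 2) (Fin 2) K)) ^ n = c • 1 := by
    rw [← Units.val_pow_eq_pow_val]; exact hc
  have hcne : c ≠ 0 := by
    intro h
    rw [h, zero_smul] at hc'
    have h1 : ((A : Matrix (Fin 2) (Fin 2) K)) ^ n * ((A⁻¹ : GL (Fin 2) K) : Matrix (Fin 2) (Fin 2) K) ^ n = 1 := by
      rw [← Units.val_pow_eq_pow_val, ← Units.val_pow_eq_pow_val, ← Units.val_mul,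
        inv_pow, mul_inv_cancel, Units.val_one]
    rw [hc', zero_mul] at h1
    exact one_ne_zero h1.symm
  set L := AlgebraicClosure K with hL
  set f : K →+* L := algebraMap K L with hf
  have hfinj : Function.Injective f := f.injective
  set B : Matrix (Fin 2) (Fin 2) L := f.mapMatrix (A : Matrix (Fin 2) (Fin 2) K) with hB
  have hBn : B ^ n = f c • 1 := by
    rw [hB, ← map_pow, hc']
    ext i j
    simp only [RingHom.mapMatrix_apply, Matrix.map_apply, Matrix.smul_apply,
      Matrix.one_apply, smul_eq_mul]
    split_ifs <;> simp
  have hdetA : ((A : Matrix (Fin 2) (Fin 2) K)).det ≠ 0 := by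
    have : IsUnit ((A : Matrix (Fin 2) (Fin 2) K)).det :=
      (Matrix.isUnit_iff_isUnit_det _).1 A.isUnit
    exact this.ne_zero
  set t : L := B.trace with ht0
  set d : L := B.det with hd0
  have hdmap : d = f ((A : Matrix (Fin 2) (Fin 2) K).det) := by
    rw [hd0, hB, ← RingHom.map_det]
  have htmap : t = f ((A : Matrix (Fin 2) (Fin 2) K).trace) := by
    simp [ht0, hB, Matrix.trace_fin_two, RingHom.mapMatrix_apply, Matrix.map_apply]
  have hdne : d ≠ 0 := by
    rw [hdmap]
    exact fun h => hdetA (hfinj (by rw [h, map_zero]))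
  -- eigenvalues
  obtain ⟨lam, hlam⟩ : ∃ x : L, x ^ 2 - t * x + d = 0 := by
    obtain ⟨x, hx⟩ := IsAlgClosed.exists_root (p := X ^ 2 - C t * X + C d)
      (by
        have h2 : (X ^ 2 - C t * X + C d : L[X]).degree = 2 := by compute_degree!
        rw [h2]; norm_num)
    refine ⟨x, ?_⟩
    have := hx
    simp only [IsRoot, eval_add, eval_sub, eval_pow, eval_mul, eval_C, eval_X] at this
    exact this
  set mu : L := t - lam with hmu
  have hsum : lam + mu = t := by rw [hmu]; ring
  have hprod : lam * mu = d := by rw [hmu]; linear_combination -hlam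
  have hlam0 : lam ≠ 0 := fun h => hdne (by rw [← hprod, h, zero_mul])
  have hmu0 : mu ≠ 0 := fun h => hdne (by rw [← hprod, h, mul_zero])
  have hCH : B * B - t • B + d • 1 = 0 := ch2 B
  have expand : ∀ a b : L, (B - a • 1) * (B - b • 1) = B * B - (a + b) • B + (a * b) • 1 := by
    intro a b
    simp only [sub_mul, mul_sub, smul_mul_assoc, mul_smul_comm, one_mul, mul_one]
    module
  have hfact : (B - lam • 1) * (B - mu • 1) = 0 := by
    rw [expand, hsum, hprod]; exact hCH
  have hfact' : (B - mu • 1) * (B - lam • 1) = 0 := by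
    rw [expand, add_comm mu lam, hsum, mul_comm mu lam, hprod]; exact hCH
  -- every eigenvalue to the n-th power is f c
  have hroot_pow : ∀ x : L, x ^ 2 - t * x + d = 0 → x ^ n = f c := by
    intro x hx
    have hdet0 : (B - x • 1).det = 0 := by
      have ht : t = B 0 0 + B 1 1 := Matrix.trace_fin_two B
      have hd : d = B 0 0 * B 1 1 - B 0 1 * B 1 0 := Matrix.det_fin_two B
      rw [ht, hd] at hx
      rw [Matrix.det_fin_two]
      simp only [Matrix.sub_apply, Matrix.smul_apply, Matrix.one_apply_eq, smul_eq_mul]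
      rw [Matrix.one_apply_ne (by decide), Matrix.one_apply_ne (by decide)]
      linear_combination hx
    have hcomm : Commute B (x • (1 : Matrix (Fin 2) (Fin 2) L)) :=
      (Commute.one_right B).smul_right x
    have hq := hcomm.geom_sum₂_mul n
    have hdet1 : (B ^ n - (x • (1 : Matrix (Fin 2) (Fin 2) L)) ^ n).det = 0 := by
      rw [← hq, Matrix.det_mul, hdet0, mul_zero]
    rw [hBn, _root_.smul_pow, one_pow, ← sub_smul, Matrix.det_smul, Matrix.det_one, mul_one] at hdet1
    have := pow_eq_zero_iff (n := Fintype.card (Fin 2)) (by simp) |>.1 hdet1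
    have := sub_eq_zero.1 this
    exact this.symm
  have hlamn : lam ^ n = f c := hroot_pow lam hlam
  have hmun : mu ^ n = f c := hroot_pow mu (by rw [hmu]; linear_combination hlam)
  have hfc0 : f c ≠ 0 := by rw [← hlamn]; exact pow_ne_zero _ hlam0
  set z : L := lam / mu with hz
  have hzn : z ^ n = 1 := by rw [hz, div_pow, hlamn, hmun, div_self hfc0]
  -- key: if lam ^ l = mu ^ l then A ^ l is scalar
  have key : ∀ l : ℕ, lam ^ l = mu ^ l →
      ∃ e : K, ((A : Matrix (Fin 2) (Fin 2) K)) ^ l = e • 1 := by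
    intro l hl
    have hBl : B ^ l = lam ^ l • 1 := by
      by_cases hlm : lam = mu
      · have hN2 : (B - lam • 1) * (B - lam • 1) = 0 := by
          have h' := hfact; rw [← hlm] at h'; exact h'
        set N : Matrix (Fin 2) (Fin 2) L := B - lam • 1 with hNdef
        set N' : Matrix (Fin 2) (Fin 2) L := lam⁻¹ • N with hN'
        have hN'2 : N' * N' = 0 := by
          rw [hN', smul_mul_assoc, mul_smul_comm, hN2, smul_zero, smul_zero]
        have h1N : (1 : Matrix (Fin 2) (Fin 2) L) + N' = lam⁻¹ • B := by
          rw [hN', hNdef, smul_sub, smul_smul, inv_mul_cancel₀ hlam0, one_smul]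
          abel
        have hpow := one_add_sq_zero_pow N' hN'2 n
        rw [h1N, _root_.smul_pow, hBn, ← hlamn, smul_smul, inv_pow,
          inv_mul_cancel₀ (pow_ne_zero n hlam0), one_smul] at hpow
        have hnL : (n : L) ≠ 0 := by
          have hK : (n : K) ≠ 0 := fun h =>
            hchar ((CharP.cast_eq_zero_iff K (ringChar K) n).1 h)
          intro h
          exact hK (hfinj (by rw [map_natCast, map_zero, h]))
        have hN'0 : N' = 0 := by
          have h0 : (n : L) • N' = 0 := by
            have := hpow.symm
            rwa [add_eq_left] at this
          rcases smul_eq_zero.1 h0 with h | h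
          · exact absurd h hnL
          · exact h
        have hBlam : B = lam • 1 := by
          have : N = 0 := by
            have : lam • N' = lam • (0 : Matrix (Fin 2) (Fin 2) L) := by rw [hN'0]
            rwa [hN', smul_smul, mul_inv_cancel₀ hlam0, one_smul, smul_zero] at this
          rw [hNdef] at this
          rw [sub_eq_zero] at this
          exact this
        rw [hBlam, _root_.smul_pow, one_pow]
      · have hdel : lam - mu ≠ 0 := sub_ne_zero.2 hlm
        set P1 : Matrix (Fin 2) (Fin 2) L := (lam - mu)⁻¹ • (B - mu • 1) with hP1
        set P2 : Matrix (Fin 2) (Fin 2) L := (mu - lam)⁻¹ • (B - lam • 1) with hP2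
        have hsumP : P1 + P2 = 1 := by
          rw [hP1, hP2]
          have h1 : (mu - lam)⁻¹ = -(lam - mu)⁻¹ := by rw [← neg_sub lam mu, inv_neg]
          rw [h1, neg_smul, ← sub_eq_add_neg, ← smul_sub]
          have h2 : (B - mu • 1) - (B - lam • 1) = (lam - mu) • (1 : Matrix (Fin 2) (Fin 2) L) := by
            module
          rw [h2, smul_smul, inv_mul_cancel₀ hdel, one_smul]
        have h01 : B * (B - mu • 1) = lam • (B - mu • 1) := by
          have h' := hfact
          rw [sub_mul, smul_mul_assoc, one_mul, sub_eq_zero] at h'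
          exact h'
        have h02 : B * (B - lam • 1) = mu • (B - lam • 1) := by
          have h' := hfact'
          rw [sub_mul, smul_mul_assoc, one_mul, sub_eq_zero] at h'
          exact h'
        have hBP1 : B * P1 = lam • P1 := by
          rw [hP1, mul_smul_comm, h01, smul_smul, smul_smul, mul_comm]
        have hBP2 : B * P2 = mu • P2 := by
          rw [hP2, mul_smul_comm, h02, smul_smul, smul_smul, mul_comm]
        calc B ^ l = B ^ l * (P1 + P2) := by rw [hsumP, mul_one]
          _ = B ^ l * P1 + B ^ l * P2 := by rw [mul_add]
          _ = lam ^ l • P1 + mu ^ l • P2 := by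
              rw [pow_smul_aux B P1 lam hBP1 l, pow_smul_aux B P2 mu hBP2 l]
          _ = lam ^ l • (P1 + P2) := by rw [← hl, smul_add]
          _ = lam ^ l • 1 := by rw [hsumP]
    have hmapl : ∀ i j : Fin 2, f ((((A : Matrix (Fin 2) (Fin 2) K)) ^ l) i j) =
        (lam ^ l • (1 : Matrix (Fin 2) (Fin 2) L)) i j := by
      intro i j
      rw [← hBl, hB, ← map_pow]
      simp [RingHom.mapMatrix_apply, Matrix.map_apply]
    refine ⟨(((A : Matrix (Fin 2) (Fin 2) K)) ^ l) 0 0, ?_⟩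
    have hfe : f ((((A : Matrix (Fin 2) (Fin 2) K)) ^ l) 0 0) = lam ^ l := by
      rw [hmapl 0 0]; simp [Matrix.smul_apply, Matrix.one_apply]
    ext i j
    apply hfinj
    rw [hmapl i j]
    fin_cases i <;> fin_cases j <;>
      simp [Matrix.smul_apply, Matrix.one_apply, hfe]
  have hprim : IsPrimitiveRoot z n := by
    refine ⟨hzn, ?_⟩
    intro l hl
    have hll : lam ^ l = mu ^ l := by
      have h' : (lam / mu) ^ l = 1 := hl
      rw [div_pow, div_eq_one_iff_eq (pow_ne_zero _ hmu0)] at h'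
      exact h'
    obtain ⟨e, hel⟩ := key l hll
    have hcentral : A ^ l ∈ Subgroup.center (GL (Fin 2) K) :=
      scalar_mem_center (A ^ l) e (by rw [Units.val_pow_eq_pow_val]; exact hel)
    have hpl : (QuotientGroup.mk' (Subgroup.center (GL (Fin 2) K)) A) ^ l = 1 := by
      rw [← map_pow]
      exact (QuotientGroup.eq_one_iff _).2 hcentral
    exact hord ▸ orderOf_dvd_of_pow_eq_one hpl
  refine ⟨z, hprim, RingHom.mem_range.2
    ⟨((A : Matrix (Fin 2) (Fin 2) K)).trace ^ 2 / ((A : Matrix (Fin 2) (Fin 2) K)).det - 2, ?_⟩⟩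
  have : f (((A : Matrix (Fin 2) (Fin 2) K)).trace ^ 2 / ((A : Matrix (Fin 2) (Fin 2) K)).det - 2)
      = t ^ 2 / d - 2 := by
    rw [map_sub, map_div₀, map_pow, ← htmap, ← hdmap, map_ofNat]
  rw [hf] at this
  rw [this, hz, ← hsum, ← hprod, inv_div]
  rw [eq_comm, div_add_div _ _ hmu0 hlam0, eq_sub_iff_add_eq, div_add' _ _ _ (mul_ne_zero hmu0 hlam0), div_eq_div_iff (mul_ne_zero hmu0 hlam0) (mul_ne_zero hlam0 hmu0)]
  ring
end
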